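/- Let K be a field of characteristic ≠ 2 and let q, q' be quadratic forms over K of the same dimension. If q' is similar to an n-fold Pfister form q (i.e., q' ≅ ⟨λ⟩·q for some λ ∈ Kˣ) and q' represents 1, then q' ≅ q. -/

import Mathlib

open scoped BigOperators

/-- The diagonal quadratic form with weights `w`, as a function on `ι → K`. -/
def diagQF {K : Type} [Field K] {ι : Type} [Fintype ι] (w : ι → K) : (ι → K) → K :=
  fun v => ∑ i, w i * v i ^ 2

/-- `c` is a value represented by the diagonal quadratic form with weights `w`. -/
def RepresentsQF {K : Type} [Field K] {ι : Type} [Fintype ι] (w : ι → K) (c : K) : Prop :=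
  ∃ v, diagQF w v = c

/-- Isometry (isomorphism) of diagonal quadratic forms. -/
def QFEquiv (K : Type) [Field K] {ι κ : Type} [Fintype ι] [Fintype κ]
    (w : ι → K) (w' : κ → K) : Prop :=
  ∃ e : (ι → K) ≃ₗ[K] (κ → K), ∀ v, diagQF w' (e v) = diagQF w v

/-- Scaling a diagonal quadratic form by `c` : the form `⟨c⟩·q`. -/
def smulW {K : Type} [Field K] {ι : Type} (c : K) (w : ι → K) : ι → K := fun i => c * w i

/-- Tensor product of diagonal quadratic forms. -/
def tensorW {K : Type} [Field K] {ι κ : Type} (w₁ : ι → K) (w₂ : κ → K) : ι × κ → K :=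
  fun p => w₁ p.1 * w₂ p.2

/-- The 1-fold Pfister form `⟨⟨a⟩⟩ = ⟨1, -a⟩`. -/
def pf1 {K : Type} [Field K] (a : K) : Fin 2 → K := ![1, -a]

/-- The 2-fold Pfister form `⟨⟨a, d⟩⟩ = ⟨1,-a⟩ ⊗ ⟨1,-d⟩`. -/
def pf2 {K : Type} [Field K] (a d : K) : Fin 2 × Fin 2 → K := tensorW (pf1 a) (pf1 d)

/-- The n-fold Pfister form `⟨⟨a 0, …, a (n-1)⟩⟩`. -/
def pfW {K : Type} [Field K] {n : ℕ} (a : Fin n → K) : (Fin n → Fin 2) → K :=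
  fun f => ∏ i, if f i = 0 then 1 else -a i

/-- Orthogonal sum of diagonal quadratic forms. -/
def orthW {K : Type} [Field K] {ι κ : Type} (w₁ : ι → K) (w₂ : κ → K) : ι ⊕ κ → K :=
  Sum.elim w₁ w₂

/-- The weights of an orthogonal sum of `m` hyperbolic planes. -/
def hypW (K : Type) [Field K] (m : ℕ) : Fin m ⊕ Fin m → K :=
  Sum.elim (fun _ => 1) (fun _ => -1)

/-- Witt equivalence of diagonal quadratic forms: they become isometric after
adding hyperbolic planes. -/
def WittEquiv (K : Type) [Field K] {ι κ : Type} [Fintype ι] [Fintype κ]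
    (w : ι → K) (w' : κ → K) : Prop :=
  ∃ m m' : ℕ, QFEquiv K (orthW w (hypW K m)) (orthW w' (hypW K m'))

/-- A diagonal quadratic form is anisotropic. -/
def AnisotropicQF {K : Type} [Field K] {ι : Type} [Fintype ι] (w : ι → K) : Prop :=
  ∀ v, diagQF w v = 0 → v = 0

/-- Base change of a diagonal quadratic form along a field extension. -/
def bcW {k K : Type} [Field k] [Field K] [Algebra k K] {ι : Type} (w : ι → k) : ι → K :=
  fun i => algebraMap k K (w i)

/-! Pfister forms are round, i.e. `b·φ ≅ φ` for every nonzero value `b` of `φ`, by induction on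
the number of slots: `⟨⟨a₁, …, aₙ₊₁⟩⟩ ≅ φ ⊥ c·φ` with `φ = ⟨⟨a₁, …, aₙ⟩⟩` round and `c = -aₙ₊₁`.
A value of `φ ⊥ c·φ` is `b = x + c y` with `x, y` values of `φ`; when `x y ≠ 0`, the binary
isometry `⟨x, c y⟩ ≅ ⟨b, b c x y⟩` tensored with `φ`, together with `x·φ ≅ φ ≅ y·φ`, gives
`b·(φ ⊥ c·φ) ≅ φ ⊥ c·φ`.
If `q' ≅ λ·q` represents `1`, then `q` represents `λ⁻¹`, so by roundness `q ≅ λ·q ≅ q'`. -/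

section

variable {K : Type} [Field K]

section Weights

variable {ι : Type}

theorem smulW_smulW (c c' : K) (w : ι → K) : smulW c (smulW c' w) = smulW (c * c') w := by
  funext i; simp only [smulW, mul_assoc]

theorem smulW_one (w : ι → K) : smulW (1 : K) w = w := by
  funext i; simp only [smulW, one_mul]

theorem smulW_orthW {κ : Type} (c : K) (w₁ : ι → K) (w₂ : κ → K) :
    smulW c (orthW w₁ w₂) = orthW (smulW c w₁) (smulW c w₂) := by
  funext s; cases s <;> rfl

theorem diagQF_smulW [Fintype ι] (c : K) (w v : ι → K) :
    diagQF (smulW c w) v = c * diagQF w v := by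
  simp only [diagQF, smulW, Finset.mul_sum, mul_assoc]

theorem diagQF_orthW [Fintype ι] {κ : Type} [Fintype κ] (w₁ : ι → K) (w₂ : κ → K)
    (v : ι ⊕ κ → K) :
    diagQF (orthW w₁ w₂) v = diagQF w₁ (v ∘ Sum.inl) + diagQF w₂ (v ∘ Sum.inr) := by
  simp only [diagQF, orthW, Fintype.sum_sum_type, Sum.elim_inl, Sum.elim_inr, Function.comp]

theorem diagQF_tensorW [Fintype ι] {κ : Type} [Fintype κ] (w₁ : ι → K) (w₂ : κ → K)
    (v : ι × κ → K) :
    diagQF (tensorW w₁ w₂) v = ∑ i, w₁ i * diagQF w₂ (fun j => v (i, j)) := by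
  simp only [diagQF, tensorW, Fintype.sum_prod_type, Finset.mul_sum, mul_assoc]

end Weights

namespace QFEquiv

variable {ι κ μ : Type} [Fintype ι] [Fintype κ] [Fintype μ]

@[refl]
theorem refl (w : ι → K) : QFEquiv K w w :=
  ⟨LinearEquiv.refl K _, fun _ => rfl⟩

@[symm]
theorem symm {w : ι → K} {w' : κ → K} (h : QFEquiv K w w') : QFEquiv K w' w := by
  obtain ⟨e, he⟩ := h
  exact ⟨e.symm, fun v => by simpa using (he (e.symm v)).symm⟩

@[trans]
theorem trans {w : ι → K} {w' : κ → K} {w'' : μ → K}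
    (h : QFEquiv K w w') (h' : QFEquiv K w' w'') : QFEquiv K w w'' := by
  obtain ⟨e, he⟩ := h
  obtain ⟨e', he'⟩ := h'
  exact ⟨e.trans e', fun v => (he' (e v)).trans (he v)⟩

theorem represents {w : ι → K} {w' : κ → K} (h : QFEquiv K w w') {c : K}
    (hc : RepresentsQF w c) : RepresentsQF w' c := by
  obtain ⟨e, he⟩ := h
  obtain ⟨v, rfl⟩ := hc
  exact ⟨e v, he v⟩

theorem of_comp_equiv (σ : ι ≃ κ) (w : κ → K) : QFEquiv K (w ∘ σ) w := by
  refine ⟨(LinearEquiv.funCongrLeft K K σ).symm, fun v => ?_⟩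
  refine Fintype.sum_equiv σ.symm _ _ fun k => ?_
  simp [LinearEquiv.funCongrLeft]

theorem smul (c : K) {w : ι → K} {w' : κ → K} (h : QFEquiv K w w') :
    QFEquiv K (smulW c w) (smulW c w') := by
  obtain ⟨e, he⟩ := h
  exact ⟨e, fun v => by rw [diagQF_smulW, diagQF_smulW, he]⟩

theorem orth {ι' κ' : Type} [Fintype ι'] [Fintype κ']
    {w₁ : ι → K} {w₁' : ι' → K} {w₂ : κ → K} {w₂' : κ' → K}
    (h₁ : QFEquiv K w₁ w₁') (h₂ : QFEquiv K w₂ w₂') :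
    QFEquiv K (orthW w₁ w₂) (orthW w₁' w₂') := by
  obtain ⟨e₁, he₁⟩ := h₁
  obtain ⟨e₂, he₂⟩ := h₂
  let E := LinearEquiv.sumArrowLequivProdArrow ι κ K K ≪≫ₗ e₁.prodCongr e₂ ≪≫ₗ
    (LinearEquiv.sumArrowLequivProdArrow ι' κ' K K).symm
  refine ⟨E, fun v => ?_⟩
  rw [diagQF_orthW, diagQF_orthW]
  exact congrArg₂ (· + ·) (he₁ _) (he₂ _)

theorem lTensor (w : ι → K) {w₂ : κ → K} {w₂' : μ → K} (h : QFEquiv K w₂ w₂') :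
    QFEquiv K (tensorW w w₂) (tensorW w w₂') := by
  obtain ⟨e, he⟩ := h
  let E := LinearEquiv.curry K K ι κ ≪≫ₗ LinearEquiv.piCongrRight (fun _ => e) ≪≫ₗ
    (LinearEquiv.curry K K ι μ).symm
  refine ⟨E, fun v => ?_⟩
  rw [diagQF_tensorW, diagQF_tensorW]
  exact Finset.sum_congr rfl fun i _ => congrArg (w i * ·) (he fun j => v (i, j))

end QFEquiv

variable {ι κ : Type} [Fintype ι] [Fintype κ]

theorem qfEquiv_orthW_comm (w₁ : ι → K) (w₂ : κ → K) :
    QFEquiv K (orthW w₁ w₂) (orthW w₂ w₁) := by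
  have h : orthW w₂ w₁ ∘ Equiv.sumComm ι κ = orthW w₁ w₂ := by
    funext s; cases s <;> rfl
  exact h ▸ QFEquiv.of_comp_equiv _ _

theorem qfEquiv_smulW_sq {s : K} (hs : s ≠ 0) (w : ι → K) :
    QFEquiv K (smulW (s ^ 2) w) w := by
  refine ⟨LinearEquiv.smulOfUnit (Units.mk0 s hs), fun v => ?_⟩
  refine Finset.sum_congr rfl fun i _ => ?_
  show w i * (s * v i) ^ 2 = s ^ 2 * w i * v i ^ 2
  ring

theorem qfEquiv_orthW_tensorW_pair (w : ι → K) (p r : K) :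
    QFEquiv K (orthW (smulW p w) (smulW r w)) (tensorW w ![p, r]) := by
  let σ : ι ⊕ ι ≃ ι × Fin 2 := (Equiv.boolProdEquivSum ι).symm.trans
    ((Equiv.prodComm _ _).trans ((Equiv.refl ι).prodCongr finTwoEquiv.symm))
  have h : tensorW w ![p, r] ∘ σ = orthW (smulW p w) (smulW r w) := by
    funext s
    cases s <;> exact mul_comm _ _
  exact h ▸ QFEquiv.of_comp_equiv σ _

theorem QFEquiv.orthW_smulW_pair (w : ι → K) {p r p' r' : K}
    (h : QFEquiv K ![p, r] ![p', r']) :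
    QFEquiv K (orthW (smulW p w) (smulW r w)) (orthW (smulW p' w) (smulW r' w)) :=
  (qfEquiv_orthW_tensorW_pair w p r).trans
    ((h.lTensor w).trans (qfEquiv_orthW_tensorW_pair w p' r').symm)

-- The change of variables `(s, t) ↦ (s + y t, s - x t)`.
theorem qfEquiv_binary {x y : K} (hxy : x + y ≠ 0) :
    QFEquiv K ![x + y, x * y * (x + y)] ![x, y] := by
  have h₁ : !![x / (x + y), y / (x + y); 1 / (x + y), -(1 / (x + y))] * !![1, y; 1, -x] = 1 := by
    simp only [Matrix.mul_fin_two, Matrix.one_fin_two, EmbeddingLike.apply_eq_iff_eq,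
      Matrix.vecCons_inj, and_true]
    refine ⟨⟨?_, ?_⟩, ?_, ?_⟩ <;> field_simp <;> ring
  have h₂ : !![1, y; 1, -x] * !![x / (x + y), y / (x + y); 1 / (x + y), -(1 / (x + y))] = 1 := by
    simp only [Matrix.mul_fin_two, Matrix.one_fin_two, EmbeddingLike.apply_eq_iff_eq,
      Matrix.vecCons_inj, and_true]
    refine ⟨⟨?_, ?_⟩, ?_, ?_⟩ <;> field_simp <;> ring
  refine ⟨Matrix.toLin'OfInv h₁ h₂, fun v => ?_⟩
  simp only [diagQF, Fin.sum_univ_two, Matrix.toLin'OfInv_apply, Matrix.toLin'_apply,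
    Matrix.mulVec, dotProduct, Matrix.of_apply, Matrix.cons_val', Matrix.cons_val_fin_one,
    Matrix.cons_val_zero, Matrix.cons_val_one]
  ring

theorem pfW_comp_snocEquiv {n : ℕ} (a : Fin (n + 1) → K) :
    pfW a ∘ (Equiv.prodComm _ _).trans (Fin.snocEquiv fun _ => Fin 2) =
      tensorW (pfW (Fin.init a)) (pf1 (a (Fin.last n))) := by
  funext ⟨f, i⟩
  fin_cases i <;> simp [pfW, tensorW, pf1, Fin.prod_univ_castSucc, Fin.snocEquiv, Fin.init]

theorem qfEquiv_pfW_succ {n : ℕ} (a : Fin (n + 1) → K) :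
    QFEquiv K (orthW (pfW (Fin.init a)) (smulW (-a (Fin.last n)) (pfW (Fin.init a))))
      (pfW a) := by
  have h := QFEquiv.of_comp_equiv
    ((Equiv.prodComm _ _).trans (Fin.snocEquiv fun _ => Fin 2)) (pfW a)
  rw [pfW_comp_snocEquiv] at h
  have h' := qfEquiv_orthW_tensorW_pair (pfW (Fin.init a)) 1 (-a (Fin.last n))
  rw [smulW_one] at h'
  exact h'.trans h

def IsRound (w : ι → K) : Prop :=
  ∀ b ≠ 0, RepresentsQF w b → QFEquiv K (smulW b w) w

theorem IsRound.of_qfEquiv {w : ι → K} {w' : κ → K} (h : QFEquiv K w w') (hw : IsRound w) :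
    IsRound w' :=
  fun b hb hrep => (h.symm.smul b).trans ((hw b hb (h.symm.represents hrep)).trans h)

theorem isRound_one [Unique ι] : IsRound (fun _ : ι => (1 : K)) := by
  rintro b hb ⟨v, rfl⟩
  have hv : diagQF (fun _ : ι => (1 : K)) v = v default ^ 2 := by
    simp [diagQF]
  rw [hv] at hb ⊢
  exact qfEquiv_smulW_sq (pow_ne_zero_iff two_ne_zero |>.mp hb) _

theorem IsRound.orthW_smulW {w : ι → K} (hw : IsRound w) (c : K) :
    IsRound (orthW w (smulW c w)) := by
  rintro b hb ⟨v, hv⟩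
  set x := diagQF w (v ∘ Sum.inl)
  set y := diagQF w (v ∘ Sum.inr)
  have hb_eq : b = x + c * y := by rw [← hv, diagQF_orthW, diagQF_smulW]
  rw [smulW_orthW, smulW_smulW]
  rcases eq_or_ne y 0 with hy | hy
  · have hbw : QFEquiv K (smulW b w) w := hw b hb ⟨_, by rw [hb_eq, hy, mul_zero, add_zero]⟩
    refine hbw.orth ?_
    rw [mul_comm, ← smulW_smulW]
    exact hbw.smul c
  have hyw : QFEquiv K (smulW y w) w := hw y hy ⟨_, rfl⟩
  rcases eq_or_ne x 0 with hx | hx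
  · have hb_eq' : b = c * y := by rw [hb_eq, hx, zero_add]
    have hc : c ≠ 0 := left_ne_zero_of_mul (hb_eq' ▸ hb)
    have h₁ : QFEquiv K (smulW b w) (smulW c w) := by
      rw [hb_eq', ← smulW_smulW]
      exact hyw.smul c
    have h₂ : QFEquiv K (smulW (b * c) w) w := by
      rw [show b * c = c ^ 2 * y by rw [hb_eq']; ring, ← smulW_smulW]
      exact (hyw.smul _).trans (qfEquiv_smulW_sq hc w)
    exact (h₁.orth h₂).trans (qfEquiv_orthW_comm _ _)
  have hxw : QFEquiv K (smulW x w) w := hw x hx ⟨_, rfl⟩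
  have hbin : QFEquiv K ![b, x * (c * y) * b] ![x, c * y] := by
    subst hb_eq
    exact qfEquiv_binary hb
  have hxyw : QFEquiv K (smulW (b * c) w) (smulW (x * (c * y) * b) w) := by
    rw [show x * (c * y) * b = b * c * (x * y) by ring, ← smulW_smulW (b * c), ← smulW_smulW x]
    exact (((hyw.smul x).trans hxw).smul _).symm
  have hcyw : QFEquiv K (smulW (c * y) w) (smulW c w) := by
    rw [← smulW_smulW]
    exact hyw.smul c
  exact ((QFEquiv.refl _).orth hxyw).trans ((hbin.orthW_smulW_pair w).trans (hxw.orth hcyw))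

theorem isRound_pfW {n : ℕ} (a : Fin n → K) : IsRound (pfW a) := by
  induction n with
  | zero =>
    have h : pfW a = fun _ => (1 : K) := funext fun _ => Finset.prod_of_isEmpty _
    exact h ▸ isRound_one
  | succ n ih => exact ((ih _).orthW_smulW _).of_qfEquiv (qfEquiv_pfW_succ a)

theorem IsRound.qfEquiv_smulW {w : ι → K} (hw : IsRound w) {c : K} (hc : c ≠ 0)
    (h : RepresentsQF (smulW c w) 1) : QFEquiv K (smulW c w) w := by
  obtain ⟨v, hv⟩ := h
  rw [diagQF_smulW] at hv
  have h := (hw c⁻¹ (inv_ne_zero hc) ⟨v, eq_inv_of_mul_eq_one_right hv⟩).smul c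
  rw [smulW_smulW, mul_inv_cancel₀ hc, smulW_one] at h
  exact h.symm

end

theorem stmt_6_general {K : Type} [Field K]
    {n : ℕ} (a : Fin n → K)
    {ι : Type} [Fintype ι] (d : ι → K)
    (hsim : ∃ c : K, c ≠ 0 ∧ QFEquiv K d (smulW c (pfW a)))
    (hone : RepresentsQF d 1) :
    QFEquiv K d (pfW a) := by
  obtain ⟨c, hc, hdc⟩ := hsim
  exact hdc.trans ((isRound_pfW a).qfEquiv_smulW hc (hdc.represents hone))

/-- a quadratic form of the same dimension as an n-fold Pfister form `q`
which is similar to `q` and represents `1` is isometric to `q`. -/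
theorem stmt_6 {K : Type} [Field K] (hchar : (2 : K) ≠ 0)
    {n : ℕ} (a : Fin n → K) (ha : ∀ i, a i ≠ 0)
    {ι : Type} [Fintype ι] (d : ι → K) (hd : ∀ i, d i ≠ 0)
    (hdim : Fintype.card ι = 2 ^ n)
    (hsim : ∃ c : K, c ≠ 0 ∧ QFEquiv K d (smulW c (pfW a)))
    (hone : RepresentsQF d 1) :
    QFEquiv K d (pfW a) :=
  stmt_6_general a d hsim hone
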